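/- For a range query [a, b] over a sorted level authenticated by a Merkle tree, if the proof returns a contiguous run of leaves whose first record has key ≤ a (or is the leftmost leaf) and whose last record has key ≥ b (or is the rightmost leaf), and all authentication paths verify against the root, then the returned records contain every record of the level with key in [a, b], or a hash collision can be extracted. -/

import Mathlib

def HashCollision {α : Type*} (H : α → α) : Prop :=
  ∃ x y, x ≠ y ∧ H x = H y

def merkleRoot {α : Type*} [Inhabited α] (H : α → α) (pair : α → α → α) :
    ℕ → List α → α
  | 0, l => H (l.headD default)
  | d + 1, l => H (pair (merkleRoot H pair d (l.take (2 ^ d)))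
                        (merkleRoot H pair d (l.drop (2 ^ d))))

def pathRoot {α : Type*} (H : α → α) (pair : α → α → α) :
    α → ℕ → List α → α
  | h, _, [] => h
  | h, i, s :: rest =>
      pathRoot H pair (if i % 2 = 1 then H (pair s h) else H (pair h s))
        (i / 2) rest

def verifyPath {α : Type*} (H : α → α) (pair : α → α → α)
    (v : α) (i : ℕ) (sibs : List α) : α :=
  pathRoot H pair (H v) i sibs

lemma pathRoot_append {α : Type*} (H : α → α) (pair : α → α → α) :
    ∀ (xs ys : List α) (h : α) (i : ℕ),
      pathRoot H pair h i (xs ++ ys)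
        = pathRoot H pair (pathRoot H pair h i xs) (i / 2 ^ xs.length) ys
  | [], ys, h, i => by simp [pathRoot]
  | x :: xs, ys, h, i => by
      rw [show (x :: xs) ++ ys = x :: (xs ++ ys) from rfl]
      simp only [pathRoot]
      rw [pathRoot_append H pair xs ys, List.length_cons,
          Nat.div_div_eq_div_mul, pow_succ, mul_comm (2 ^ xs.length) 2]

lemma pathRoot_mod {α : Type*} (H : α → α) (pair : α → α → α) :
    ∀ (xs : List α) (h : α) (i : ℕ),
      pathRoot H pair h i xs = pathRoot H pair h (i % 2 ^ xs.length) xs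
  | [], h, i => by simp [pathRoot]
  | x :: xs, h, i => by
      simp only [pathRoot, List.length_cons]
      have h1 : i % 2 ^ (xs.length + 1) % 2 = i % 2 :=
        Nat.mod_mod_of_dvd _ ⟨2 ^ xs.length, by rw [pow_succ, mul_comm]⟩
      have h2 : i % 2 ^ (xs.length + 1) / 2 = i / 2 % 2 ^ xs.length := by
        rw [pow_succ, mul_comm, Nat.mod_mul_right_div_self]
      simp only [h1, h2]
      exact pathRoot_mod H pair xs _ (i / 2)

lemma merkle_sound {α : Type*} [Inhabited α] (H : α → α) (pair : α → α → α)
    (hpair : Function.Injective2 pair) :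
    ∀ (d : ℕ) (recs : List α) (h : α) (i : ℕ) (sibs : List α),
      recs.length = 2 ^ d → i < 2 ^ d → sibs.length = d →
      pathRoot H pair h i sibs = merkleRoot H pair d recs →
      h = H (recs.getD i default) ∨ HashCollision H := by
  intro d
  induction d with
  | zero =>
    intro recs h i sibs hlen hi hs heq
    interval_cases i
    rw [List.length_eq_zero_iff] at hs; subst hs
    match recs, hlen with
    | [x], _ => simp [pathRoot, merkleRoot] at heq ⊢; exact Or.inl heq
  | succ d ih =>
    intro recs h i sibs hlen hi hs heq
    rcases sibs.eq_nil_or_concat with rfl | ⟨xs, t, rfl⟩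
    · simp at hs
    · rw [List.concat_eq_append] at hs heq
      have hxs : xs.length = d := by simpa using hs
      rw [pathRoot_append, hxs] at heq
      have hlt : recs.length = 2 ^ d + 2 ^ d := by rw [hlen]; ring
      have htake : (recs.take (2 ^ d)).length = 2 ^ d := by
        rw [List.length_take]; omega
      have hdrop : (recs.drop (2 ^ d)).length = 2 ^ d := by
        rw [List.length_drop]; omega
      by_cases hcase : i < 2 ^ d
      · have hdiv : i / 2 ^ d = 0 := Nat.div_eq_of_lt hcase
        rw [hdiv] at heq
        simp only [pathRoot, merkleRoot] at heq
        norm_num at heq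
        by_cases hc : pair (pathRoot H pair h i xs) t
            = pair (merkleRoot H pair d (recs.take (2 ^ d)))
                   (merkleRoot H pair d (recs.drop (2 ^ d)))
        · obtain ⟨h1, -⟩ := hpair hc
          rcases ih (recs.take (2 ^ d)) h i xs htake hcase hxs h1 with h2 | h2
          · left
            rw [h2, List.getD_eq_getElem?_getD, List.getD_eq_getElem?_getD,
              List.getElem?_take, if_pos hcase]
          · right; exact h2
        · right; exact ⟨_, _, hc, heq⟩
      · have h2d : (0:ℕ) < 2 ^ d := Nat.pow_pos (by norm_num)
        have hi2 : i < 2 ^ d + 2 ^ d := by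
          have hp : (2:ℕ) ^ (d + 1) = 2 ^ d + 2 ^ d := by ring
          omega
        have hdiv : i / 2 ^ d = 1 := by
          rw [Nat.div_eq_sub_div h2d (by omega), Nat.div_eq_of_lt (by omega)]
        rw [hdiv] at heq
        simp only [pathRoot, merkleRoot] at heq
        norm_num at heq
        by_cases hc : pair t (pathRoot H pair h i xs)
            = pair (merkleRoot H pair d (recs.take (2 ^ d)))
                   (merkleRoot H pair d (recs.drop (2 ^ d)))
        · obtain ⟨-, h1⟩ := hpair hc
          have hmod : i % 2 ^ d = i - 2 ^ d := by
            rw [Nat.mod_eq_sub_mod (by omega), Nat.mod_eq_of_lt (by omega)]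
          rw [pathRoot_mod, hxs, hmod] at h1
          rcases ih (recs.drop (2 ^ d)) h (i - 2 ^ d) xs hdrop (by omega) hxs h1
            with h2 | h2
          · left
            rw [h2, List.getD_eq_getElem?_getD, List.getD_eq_getElem?_getD,
              List.getElem?_drop]
            have hidx : 2 ^ d + (i - 2 ^ d) = i := by omega
            rw [hidx]
          · right; exact h2
        · right; exact ⟨_, _, hc, heq⟩

/-- Completeness of authenticated range queries: for a level sorted strictly
increasing by key, if the prover returns a contiguous run of leaves at
positions `s..e`, all authenticated against the root, whose first record has
key ≤ `a` (or is the leftmost leaf) and whose last record has key ≥ `b` (or is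
the rightmost leaf), then every record of the level with key in `[a, b]`
appears among the returned records, or a hash collision can be extracted. -/
theorem range_query_completeness {α : Type*} [Inhabited α]
    (H : α → α) (pair : α → α → α) (hpair : Function.Injective2 pair)
    (key : α → ℕ) (d : ℕ) (recs : List α)
    (hlen : recs.length = 2 ^ d)
    (hsorted : recs.Pairwise (fun r r' => key r < key r'))
    (a b : ℕ) (s e : ℕ) (hse : s ≤ e) (he : e < 2 ^ d)
    (rs : List α) (hrs : rs.length = e - s + 1)
    (hver : ∀ p, s ≤ p → p ≤ e → ∃ sibs : List α, sibs.length = d ∧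
      verifyPath H pair (rs.getD (p - s) default) p sibs
        = merkleRoot H pair d recs)
    (hleft : key (rs.getD 0 default) ≤ a ∨ s = 0)
    (hright : b ≤ key (rs.getD (e - s) default) ∨ e = 2 ^ d - 1) :
    (∀ r ∈ recs, a ≤ key r → key r ≤ b → r ∈ rs) ∨ HashCollision H := by
  by_cases hcol : HashCollision H
  · exact Or.inr hcol
  left
  have hget : ∀ p, s ≤ p → p ≤ e →
      rs.getD (p - s) default = recs.getD p default := by
    intro p hsp hpe
    obtain ⟨sibs, hsl, hv⟩ := hver p hsp hpe
    rcases merkle_sound H pair hpair d recs (H (rs.getD (p - s) default)) p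
        sibs hlen (by omega) hsl hv with h | h
    · by_contra hne; exact hcol ⟨_, _, hne, h⟩
    · exact absurd h hcol
  have hmono := List.pairwise_iff_getElem.mp hsorted
  intro r hr ha hb
  obtain ⟨i, hilt, hrec⟩ := List.mem_iff_getElem.1 hr
  have hrecD : recs.getD i default = r := by
    rw [List.getD_eq_getElem _ _ hilt]; exact hrec
  have hsi : s ≤ i := by
    rcases hleft with hl | hs0
    · by_contra hlt
      push_neg at hlt
      have hslt : s < recs.length := by omega
      have h0 : rs.getD 0 default = recs.getD s default := by
        have := hget s le_rfl hse
        simpa using this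
      have hkey : key recs[i] < key recs[s] := hmono i s hilt hslt hlt
      rw [hrec] at hkey
      rw [h0, List.getD_eq_getElem _ _ hslt] at hl
      omega
    · omega
  have hie : i ≤ e := by
    rcases hright with hr' | he2
    · by_contra hlt
      push_neg at hlt
      have helt : e < recs.length := by omega
      have hkey : key recs[e] < key recs[i] := hmono e i helt hilt hlt
      rw [hrec] at hkey
      rw [hget e hse le_rfl, List.getD_eq_getElem _ _ helt] at hr'
      omega
    · omega
  have hfin : rs.getD (i - s) default = r := by rw [hget i hsi hie, hrecD]
  have hlt' : i - s < rs.length := by omega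
  rw [← hfin, List.getD_eq_getElem _ _ hlt']
  exact List.getElem_mem hlt'
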